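/- Let F : X → H be a continuous frame for a separable complex Hilbert space H with respect to a measure space (X, μ) with σ-finite positive measure. A bounded operator V : L²(X, μ) → H satisfies V T_F^* = Id_H with (ker V)^⊥ a reproducing kernel Hilbert subspace of L²(X, μ) if and only if V = S_F^{-1} T_F + W (Id_{L²(X,μ)} − T_F^* S_F^{-1} T_F) for some bounded operator W : L²(X, μ) → H such that (ker W)^⊥ is a reproducing kernel Hilbert subspace of L²(X, μ). -/

import Mathlib

open MeasureTheory ENNReal

noncomputable section

namespace ContFrame

variable {X : Type*} {H : Type*}

/-- The paper's inner product `⟨f, g⟩`: linear in the first argument and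
conjugate-linear in the second (Mathlib's `inner` is conjugate-linear in the first). -/
def pinner [NormedAddCommGroup H] [InnerProductSpace ℂ H] (f g : H) : ℂ :=
  @inner ℂ _ _ g f

/-- `∫_X |⟨f, F x⟩|² dμ(x)`, as a lower integral. -/
def frameInt [MeasurableSpace X] [NormedAddCommGroup H] [InnerProductSpace ℂ H]
    (μ : Measure X) (F : X → H) (f : H) : ℝ≥0∞ :=
  ∫⁻ x, (‖pinner f (F x)‖₊ : ℝ≥0∞) ^ 2 ∂μ

/-- `F` is weakly measurable: `x ↦ ⟨f, F x⟩` is μ-measurable for every `f`. -/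
def WeaklyMeasurable [MeasurableSpace X] [NormedAddCommGroup H] [InnerProductSpace ℂ H]
    (μ : Measure X) (F : X → H) : Prop :=
  ∀ f : H, AEMeasurable (fun x => pinner f (F x)) μ

/-- `F` is a Bessel mapping for `H` w.r.t. `(X, μ)` with Bessel bound `B < ∞`. -/
def IsBesselMapping [MeasurableSpace X] [NormedAddCommGroup H] [InnerProductSpace ℂ H]
    (μ : Measure X) (F : X → H) (B : ℝ≥0∞) : Prop :=
  B < ⊤ ∧ WeaklyMeasurable μ F ∧
    ∀ f : H, frameInt μ F f ≤ B * (‖f‖₊ : ℝ≥0∞) ^ 2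

/-- `F` is a continuous frame for `H` w.r.t. `(X, μ)` with frame bounds `0 < A ≤ B < ∞`:
`A ‖f‖² ≤ ∫_X |⟨f, F x⟩|² dμ(x) ≤ B ‖f‖²` for all `f ∈ H`. -/
def IsContinuousFrame [MeasurableSpace X] [NormedAddCommGroup H] [InnerProductSpace ℂ H]
    (μ : Measure X) (F : X → H) (A B : ℝ≥0∞) : Prop :=
  0 < A ∧ A ≤ B ∧ B < ⊤ ∧ WeaklyMeasurable μ F ∧
    ∀ f : H, A * (‖f‖₊ : ℝ≥0∞) ^ 2 ≤ frameInt μ F f ∧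
      frameInt μ F f ≤ B * (‖f‖₊ : ℝ≥0∞) ^ 2

/-- A realization of the Hilbert tensor product `H = H₁ ⊗ H₂`: a bilinear map
`tmul` whose simple tensors satisfy `⟪a⊗b, c⊗d⟫ = ⟪a,c⟫⟪b,d⟫` and span a dense subspace. -/
structure HilbertTensorProduct (H₁ H₂ H : Type*)
    [NormedAddCommGroup H₁] [InnerProductSpace ℂ H₁]
    [NormedAddCommGroup H₂] [InnerProductSpace ℂ H₂]
    [NormedAddCommGroup H] [InnerProductSpace ℂ H] where
  tmul : H₁ →ₗ[ℂ] H₂ →ₗ[ℂ] H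
  inner_tmul : ∀ (a c : H₁) (b d : H₂),
    (inner ℂ (tmul a b) (tmul c d) : ℂ) = (inner ℂ a c : ℂ) * (inner ℂ b d : ℂ)
  dense_span : Dense (↑(Submodule.span ℂ {z : H | ∃ a b, z = tmul a b}) : Set H)

/-- `T : L²(X,μ) → H` is the synthesis operator of `F`, characterized by the fact
that its adjoint is the analysis operator `(T^* f)(x) = ⟨f, F x⟩`. -/
def IsSynthesisOperator {X H : Type*} [MeasurableSpace X]
    [NormedAddCommGroup H] [InnerProductSpace ℂ H] [CompleteSpace H]
    (μ : Measure X) (F : X → H) (T : Lp ℂ 2 μ →L[ℂ] H) : Prop :=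
  ∀ f : H, (ContinuousLinearMap.adjoint T f : X → ℂ) =ᵐ[μ] fun x => pinner f (F x)

/-- `G` is a dual frame of the continuous frame `F`:
`⟨f, g⟩ = ∫_X ⟨f, F x⟩ ⟨G x, g⟩ dμ(x)` for all `f, g ∈ H`. -/
def IsDualFrame {X H : Type*} [MeasurableSpace X]
    [NormedAddCommGroup H] [InnerProductSpace ℂ H]
    (μ : Measure X) (F G : X → H) : Prop :=
  (∃ A B, IsContinuousFrame μ G A B) ∧
    ∀ f g : H, pinner f g = ∫ x, pinner f (F x) * pinner (G x) g ∂μ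

/-- A subspace `S` of `L²(X, μ)` is a reproducing kernel Hilbert subspace: there is a
kernel map `k : X → L²` with values in `S` such that every `f ∈ S` is represented by
the function `x ↦ ⟨f, k_x⟩` (in particular, evaluations are bounded on `S`). -/
def IsRKHS {X : Type*} [MeasurableSpace X] (μ : Measure X)
    (S : Submodule ℂ (Lp ℂ 2 μ)) : Prop :=
  ∃ k : X → Lp ℂ 2 μ, (∀ x, k x ∈ S) ∧
    ∀ f ∈ S, (f : X → ℂ) =ᵐ[μ] fun x => pinner f (k x)

/-!
A surjective `V : L²(X, μ) → H` which is the synthesis operator of some map `G : X → H`, i.e.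
`(V^* g)(x) = ⟨g, G x⟩`, has `(ker V)^⊥` a reproducing kernel subspace: if `k x ∈ (ker V)^⊥`
solves `V (k x) = G x`, then `(V^* g)(x) = ⟨V^* g, k x⟩`, and the functions reproduced by `k`
form a closed subset of `L²` (limits in `L²` are a.e. limits along a subsequence), so they
contain the closure of the range of `V^*`, which is `(ker V)^⊥`. Conversely, if `k` reproduces
`(ker W)^⊥ ⊇ range W^*`, then `W` is the synthesis operator of `x ↦ W (k x)`.

Synthesis operators are stable under sums and under composition on the left, so
`S_F^{-1} T_F + W - (W T_F^* S_F^{-1}) T_F` is one as soon as `W` is; and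
`V = S_F^{-1} T_F + W (1 - T_F^* S_F^{-1} T_F)` describes exactly the left inverses of `T_F^*`,
since `S_F^{-1} T_F` is one.
-/

open ContinuousLinearMap Filter

section LeftInverse

variable {𝕜 E K : Type*} [NontriviallyNormedField 𝕜]
  [NormedAddCommGroup E] [NormedSpace 𝕜 E] [NormedAddCommGroup K] [NormedSpace 𝕜 K]
  {R : K →L[𝕜] E} {L : E →L[𝕜] K}

theorem add_comp_id_sub_comp_eq_id (hLR : L ∘L R = ContinuousLinearMap.id 𝕜 K)
    (W : E →L[𝕜] K) :
    (L + W ∘L (ContinuousLinearMap.id 𝕜 E - R ∘L L)) ∘L R = ContinuousLinearMap.id 𝕜 K := by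
  rw [add_comp, comp_assoc, sub_comp, id_comp, comp_assoc, hLR, comp_id, sub_self, comp_zero,
    add_zero]

theorem eq_add_comp_id_sub_comp {V : E →L[𝕜] K} (hVR : V ∘L R = ContinuousLinearMap.id 𝕜 K)
    (L : E →L[𝕜] K) :
    V = L + V ∘L (ContinuousLinearMap.id 𝕜 E - R ∘L L) := by
  rw [comp_sub, comp_id, ← comp_assoc, hVR, id_comp, add_sub_cancel]

end LeftInverse

section SynthesisOperator

variable [MeasurableSpace X] {μ : Measure X}

theorem isClosed_setOf_ae_eq {E : Type*} [NormedAddCommGroup E] {p : ℝ≥0∞} [Fact (1 ≤ p)]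
    {e : X → Lp E p μ → E} (he : ∀ x, Continuous (e x)) :
    IsClosed {f : Lp E p μ | (f : X → E) =ᵐ[μ] fun x => e x f} := by
  refine IsSeqClosed.isClosed fun s f hs hlim => ?_
  obtain ⟨ns, hns, hae⟩ := (tendstoInMeasure_of_tendsto_Lp hlim).exists_seq_tendsto_ae
  filter_upwards [hae, ae_all_iff.2 hs] with x hx hxs
  refine tendsto_nhds_unique hx ?_
  simp only [hxs]
  exact ((he x).tendsto f).comp (hlim.comp hns.tendsto_atTop)

variable {K : Type*} [NormedAddCommGroup H] [InnerProductSpace ℂ H] [CompleteSpace H]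
  [NormedAddCommGroup K] [InnerProductSpace ℂ K] [CompleteSpace K]

theorem IsSynthesisOperator.add {F G : X → H} {T U : Lp ℂ 2 μ →L[ℂ] H}
    (hT : IsSynthesisOperator μ F T) (hU : IsSynthesisOperator μ G U) :
    IsSynthesisOperator μ (F + G) (T + U) := by
  intro f
  filter_upwards [hT f, hU f, Lp.coeFn_add (adjoint T f) (adjoint U f)] with x hTx hUx hx
  rw [map_add, add_apply, hx, Pi.add_apply, hTx, hUx]
  simp only [pinner, Pi.add_apply, inner_add_left]

theorem IsSynthesisOperator.sub {F G : X → H} {T U : Lp ℂ 2 μ →L[ℂ] H}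
    (hT : IsSynthesisOperator μ F T) (hU : IsSynthesisOperator μ G U) :
    IsSynthesisOperator μ (F - G) (T - U) := by
  intro f
  filter_upwards [hT f, hU f, Lp.coeFn_sub (adjoint T f) (adjoint U f)] with x hTx hUx hx
  rw [map_sub, sub_apply, hx, Pi.sub_apply, hTx, hUx]
  simp only [pinner, Pi.sub_apply, inner_sub_left]

theorem IsSynthesisOperator.comp {F : X → H} {T : Lp ℂ 2 μ →L[ℂ] H}
    (hT : IsSynthesisOperator μ F T) (A : H →L[ℂ] K) :
    IsSynthesisOperator μ (fun x => A (F x)) (A ∘L T) := by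
  intro f
  filter_upwards [hT (adjoint A f)] with x hx
  rw [adjoint_comp, comp_apply, hx, pinner, pinner, adjoint_inner_right]

theorem exists_isSynthesisOperator_of_isRKHS_orthogonal_ker {W : Lp ℂ 2 μ →L[ℂ] H}
    (hW : IsRKHS μ (LinearMap.ker (W : Lp ℂ 2 μ →ₗ[ℂ] H))ᗮ) :
    ∃ G : X → H, IsSynthesisOperator μ G W := by
  obtain ⟨k, -, hk⟩ := hW
  refine ⟨fun x => W (k x), fun g => ?_⟩
  have hmem : adjoint W g ∈ (LinearMap.ker (W : Lp ℂ 2 μ →ₗ[ℂ] H))ᗮ := by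
    rw [orthogonal_ker]
    exact Submodule.le_topologicalClosure _ ⟨g, rfl⟩
  filter_upwards [hk _ hmem] with x hx
  rw [hx, pinner, pinner, adjoint_inner_right]

theorem isRKHS_orthogonal_ker_of_isSynthesisOperator {V : Lp ℂ 2 μ →L[ℂ] H}
    (hV : Function.Surjective V) {G : X → H} (hG : IsSynthesisOperator μ G V) :
    IsRKHS μ (LinearMap.ker (V : Lp ℂ 2 μ →ₗ[ℂ] H))ᗮ := by
  choose u hu using hV
  set N := LinearMap.ker (V : Lp ℂ 2 μ →ₗ[ℂ] H)
  have : CompleteSpace N := (isClosed_ker V).completeSpace_coe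
  -- `k x` is the preimage of `G x` under `V` of minimal norm.
  set k : X → Lp ℂ 2 μ := fun x => u (G x) - N.starProjection (u (G x))
  have hVk : ∀ x, V (k x) = G x := fun x => by
    have : V (N.starProjection (u (G x))) = 0 := N.starProjection_apply_mem (u (G x))
    simp [k, hu, this]
  have hrange : ∀ g, (adjoint V g : X → ℂ) =ᵐ[μ] fun x => pinner (adjoint V g) (k x) := by
    intro g
    filter_upwards [hG g] with x hx
    rw [hx, pinner, pinner, adjoint_inner_right, hVk]
  refine ⟨k, fun x => N.sub_starProjection_mem_orthogonal _, fun f hf => ?_⟩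
  rw [orthogonal_ker, ← SetLike.mem_coe, Submodule.topologicalClosure_coe, LinearMap.coe_range]
    at hf
  exact (isClosed_setOf_ae_eq fun x => (innerSL ℂ (k x)).continuous).closure_subset_iff.2
    (Set.range_subset_iff.2 hrange) hf

end SynthesisOperator

theorem left_inverses_characterization_general
    {X H : Type*} [MeasurableSpace X]
    [NormedAddCommGroup H] [InnerProductSpace ℂ H] [CompleteSpace H]
    (μ : Measure X)
    (F : X → H)
    (TF : Lp ℂ 2 μ →L[ℂ] H) (hTF : IsSynthesisOperator μ F TF)
    -- `SFinv` is the inverse of the frame operator `S_F = T_F T_F^*`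
    (SFinv : H →L[ℂ] H)
    (hSFinv₁ : SFinv.comp (TF.comp (ContinuousLinearMap.adjoint TF))
      = ContinuousLinearMap.id ℂ H)
    (V : Lp ℂ 2 μ →L[ℂ] H) :
    (V.comp (ContinuousLinearMap.adjoint TF) = ContinuousLinearMap.id ℂ H ∧
        IsRKHS μ (LinearMap.ker (V : Lp ℂ 2 μ →ₗ[ℂ] H))ᗮ) ↔
      (∃ W : Lp ℂ 2 μ →L[ℂ] H, IsRKHS μ (LinearMap.ker (W : Lp ℂ 2 μ →ₗ[ℂ] H))ᗮ ∧
        V = SFinv.comp TF +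
          W.comp (ContinuousLinearMap.id ℂ (Lp ℂ 2 μ) -
            (ContinuousLinearMap.adjoint TF).comp (SFinv.comp TF))) := by
  constructor
  · rintro ⟨hVT, hV⟩
    exact ⟨V, hV, eq_add_comp_id_sub_comp hVT _⟩
  · rintro ⟨W, hW, rfl⟩
    obtain ⟨G, hG⟩ := exists_isSynthesisOperator_of_isRKHS_orthogonal_ker hW
    have hleft := add_comp_id_sub_comp_eq_id (L := SFinv ∘L TF) (by rwa [comp_assoc]) W
    refine ⟨hleft, isRKHS_orthogonal_ker_of_isSynthesisOperator
      (Function.LeftInverse.surjective fun g => congr($hleft g)) (by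
        rw [comp_sub, comp_id, ← comp_assoc, ← comp_assoc]
        exact (hTF.comp SFinv).add (hG.sub (hTF.comp _)))⟩

/-- The bounded left inverses `V` of the analysis operator `T_F^*`
with `(ker V)^⊥` an RKHS are precisely the operators
`V = S_F^{-1} T_F + W (Id − T_F^* S_F^{-1} T_F)` with `W` bounded and `(ker W)^⊥` an RKHS. -/
theorem left_inverses_characterization
    {X H : Type*} [MeasurableSpace X]
    [NormedAddCommGroup H] [InnerProductSpace ℂ H] [CompleteSpace H]
      [TopologicalSpace.SeparableSpace H]
    (μ : Measure X) [SigmaFinite μ]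
    (F : X → H) (A B : ℝ≥0∞) (hF : IsContinuousFrame μ F A B)
    (TF : Lp ℂ 2 μ →L[ℂ] H) (hTF : IsSynthesisOperator μ F TF)
    -- `SFinv` is the inverse of the frame operator `S_F = T_F T_F^*`
    (SFinv : H →L[ℂ] H)
    (hSFinv₁ : SFinv.comp (TF.comp (ContinuousLinearMap.adjoint TF))
      = ContinuousLinearMap.id ℂ H)
    (hSFinv₂ : (TF.comp (ContinuousLinearMap.adjoint TF)).comp SFinv
      = ContinuousLinearMap.id ℂ H)
    (V : Lp ℂ 2 μ →L[ℂ] H) :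
    (V.comp (ContinuousLinearMap.adjoint TF) = ContinuousLinearMap.id ℂ H ∧
        IsRKHS μ (LinearMap.ker (V : Lp ℂ 2 μ →ₗ[ℂ] H))ᗮ) ↔
      (∃ W : Lp ℂ 2 μ →L[ℂ] H, IsRKHS μ (LinearMap.ker (W : Lp ℂ 2 μ →ₗ[ℂ] H))ᗮ ∧
        V = SFinv.comp TF +
          W.comp (ContinuousLinearMap.id ℂ (Lp ℂ 2 μ) -
            (ContinuousLinearMap.adjoint TF).comp (SFinv.comp TF))) :=
  left_inverses_characterization_general μ F TF hTF SFinv hSFinv₁ V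

end ContFrame
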